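/- Let m ≥ 1 and let L be a positive integer with 2m | L such that M = L/(2m) is even. Rearrange G^{(z^m+z^{−m})}(L) by, for each residue r ∈ {1,…,m}, listing first the sites r, r+2m, …, r+(M−1)·2m and then the sites r+m, r+m+2m, …, r+m+(M−1)·2m. Then: (i) all entries of G^{(z^m+z^{−m})}(L) between sites belonging to different residues r ≠ r' (mod m) vanish; (ii) for each r, the entries between two sites both of the form r+(a−1)·2m vanish, and likewise between two sites both of the form r+m+(a−1)·2m, so each rearranged block has the form [[0, X],[X^T, 0]] with (X)_{ab} = G^{(z^m+z^{−m})}(L)_{r+(a−1)·2m, r+m+(b−1)·2m}; (iii) the matrix X is the same M×M matrix for every r ∈ {1,…,m}; and (iv) there exist an M×M permutation matrix P, a diagonal unitary matrix U, and a sign ε ∈ {+1,−1} such that X = ε · U P^T G^{(z+1)}(M) P U^*. -/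

import Mathlib

open scoped BigOperators Matrix

/-- `θ_k = (2π/L)(k - 1/2)` for `k = 1, …, L` (here `k : Fin L` is the 0-based index,
so `θ_k = (2π/L)(k + 1/2)`). -/
noncomputable def theta (L : ℕ) (k : Fin L) : ℝ :=
  2 * Real.pi / L * ((k : ℝ) + 1 / 2)

/-- The half-shifted correlation matrix
`G^{(f)}(L)_{nm} = ((-1)^{n-m}/L) Σ_{k=1}^{L} (f(e^{iθ_k})/|f(e^{iθ_k})|) e^{iθ_k (n-m)}`. -/
noncomputable def Gf (L : ℕ) (f : ℂ → ℂ) : Matrix (Fin L) (Fin L) ℂ :=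
  Matrix.of fun n m : Fin L =>
    (-1 : ℂ) ^ ((n : ℤ) - (m : ℤ)) / (L : ℂ) *
      ∑ k : Fin L,
        f (Complex.exp (Complex.I * (theta L k : ℂ))) /
            ((‖f (Complex.exp (Complex.I * (theta L k : ℂ)))‖ : ℝ) : ℂ) *
          Complex.exp (Complex.I * (theta L k : ℂ) * (((n : ℤ) - (m : ℤ) : ℤ) : ℂ))

/-- The site `r + (a-1)·2m` (0-based: `r + a·2m`) in a chain of length `L = 2m·M`. -/
def siteA (m M L : ℕ) (h : 2 * m * M = L) (r : Fin m) (a : Fin M) : Fin L :=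
  ⟨(r : ℕ) + (a : ℕ) * (2 * m), by
    have h1 : (r : ℕ) + (a : ℕ) * (2 * m) < ((a : ℕ) + 1) * (2 * m) := by
      have := r.isLt; nlinarith
    have h2 : ((a : ℕ) + 1) * (2 * m) ≤ M * (2 * m) := Nat.mul_le_mul_right _ a.isLt
    have h3 : M * (2 * m) = L := by rw [Nat.mul_comm]; exact h
    exact lt_of_lt_of_le h1 (le_of_le_of_eq h2 h3)⟩

/-- The site `r + m + (a-1)·2m` (0-based: `r + m + a·2m`) in a chain of length `L = 2m·M`. -/
def siteB (m M L : ℕ) (h : 2 * m * M = L) (r : Fin m) (a : Fin M) : Fin L :=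
  ⟨(r : ℕ) + m + (a : ℕ) * (2 * m), by
    have h1 : (r : ℕ) + m + (a : ℕ) * (2 * m) < ((a : ℕ) + 1) * (2 * m) := by
      have := r.isLt; nlinarith
    have h2 : ((a : ℕ) + 1) * (2 * m) ≤ M * (2 * m) := Nat.mul_le_mul_right _ a.isLt
    have h3 : M * (2 * m) = L := by rw [Nat.mul_comm]; exact h
    exact lt_of_lt_of_le h1 (le_of_le_of_eq h2 h3)⟩

/-- The permutation matrix of `σ` (with `P_{ij} = δ_{i, σ(j)}`). -/
def permMat {M : ℕ} (σ : Equiv.Perm (Fin M)) : Matrix (Fin M) (Fin M) ℂ :=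
  Matrix.of fun i j => if σ j = i then 1 else 0

/-!
On the grid `θ_k` with `L = 2mM`, the phase of `z^m + z^{-m}` is `sgn cos (mθ_k)`, and shifting
`k` by `M` moves `mθ_k` by `π`, flipping that sign. Splitting the sum over `k` into `2m` blocks of
length `M` therefore factors the Toeplitz coefficient `c(δ)` of `G` into a geometric sum of the
`2m`-th root of unity `-e^{iπδ/m}`, which vanishes unless `δ ≡ m (mod 2m)`, times
`T(δ/m) = ∑_{j<M} sgn (cos φ_j) e^{iφ_j δ/m}`, where `φ_j` is half the `j`-th angle of the grid
of length `M`. The phase of `e^{iθ} + 1` is `e^{iθ/2} sgn (cos (θ/2))`, so the coefficients of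
`G^{(z+1)}(M)` are the same sums: `c(m(2e+1)) = (-1)^{m+e} c^{(z+1)}(e)`. As `z^m + z^{-m}` is
invariant under `z ↦ z⁻¹`, `G` is symmetric; reading `X` through this symmetry and reversing
the order of the sites turns the remaining sign `(-1)^{b-a}` into the gauge `(-1)^a (-1)^b`.
-/

open Complex Finset

/-- At a zero of `f` on the circle this is `0`, consistently with `SignType.sign 0 = 0`. -/
noncomputable def symbolPhase (f : ℂ → ℂ) (θ : ℝ) : ℂ :=
  f (exp (I * θ)) / (‖f (exp (I * θ))‖ : ℂ)

noncomputable def gfCoeff (L : ℕ) (f : ℂ → ℂ) (δ : ℤ) : ℂ :=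
  (-1 : ℂ) ^ δ / L * ∑ k : Fin L, symbolPhase f (theta L k) * exp (I * theta L k * δ)

theorem Gf_apply (L : ℕ) (f : ℂ → ℂ) (n k : Fin L) :
    Gf L f n k = gfCoeff L f ((n : ℤ) - k) := rfl

theorem ofReal_div_norm_ofReal (x : ℝ) :
    (x : ℂ) / (‖(x : ℂ)‖ : ℂ) = (SignType.sign x : ℂ) := by
  rcases lt_trichotomy x 0 with hx | rfl | hx
  · rw [sign_neg hx, norm_real, Real.norm_of_nonpos hx.le]
    push_cast
    rw [div_neg, div_self (ofReal_ne_zero.mpr hx.ne)]; simp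
  · simp
  · rw [sign_pos hx, norm_real, Real.norm_of_nonneg hx.le, div_self (ofReal_ne_zero.mpr hx.ne')]
    simp

theorem unit_mul_ofReal_div_norm {u : ℂ} (hu : ‖u‖ = 1) (x : ℝ) :
    u * x / (‖u * x‖ : ℂ) = u * (SignType.sign x : ℂ) := by
  rw [norm_mul, hu, one_mul, mul_div_assoc, ofReal_div_norm_ofReal]

theorem symbolPhase_zpow_add_zpow_neg (m : ℤ) (θ : ℝ) :
    symbolPhase (fun z => z ^ m + z ^ (-m)) θ = (SignType.sign (Real.cos (m * θ)) : ℂ) := by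
  have hval : exp (I * θ) ^ m + exp (I * θ) ^ (-m) = ((2 * Real.cos (m * θ) : ℝ) : ℂ) := by
    push_cast
    rw [two_cos, ← exp_int_mul, ← exp_int_mul]
    push_cast; ring_nf
  rw [symbolPhase, hval, ofReal_div_norm_ofReal, sign_mul]
  simp

theorem symbolPhase_add_one (θ : ℝ) :
    symbolPhase (fun z => z + 1) θ =
      exp (I * (θ / 2 : ℝ)) * (SignType.sign (Real.cos (θ / 2)) : ℂ) := by
  have hval :
      exp (I * θ) + 1 = exp (I * (θ / 2 : ℝ)) * ((2 * Real.cos (θ / 2) : ℝ) : ℂ) := by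
    push_cast
    rw [two_cos, mul_add, ← exp_add, ← exp_add]
    ring_nf; rw [exp_zero, add_comm]
  have hu : ‖exp (I * (θ / 2 : ℝ))‖ = 1 := by rw [mul_comm]; exact norm_exp_ofReal_mul_I _
  rw [symbolPhase, hval, unit_mul_ofReal_div_norm hu, sign_mul]
  simp

theorem theta_rev {L : ℕ} (k : Fin L) : theta L k.rev = 2 * Real.pi - theta L k := by
  have hL : (L : ℝ) ≠ 0 := by have := k.pos; positivity
  simp only [theta, Fin.val_rev]
  rw [Nat.cast_sub (by omega)]
  push_cast
  field_simp
  ring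

theorem symbolPhase_two_pi_sub {f : ℂ → ℂ} (hf : ∀ z, f z⁻¹ = f z) (θ : ℝ) :
    symbolPhase f (2 * Real.pi - θ) = symbolPhase f θ := by
  have hinv : exp (I * (2 * Real.pi - θ : ℝ)) = (exp (I * θ))⁻¹ := by
    rw [← exp_neg, show I * ((2 * Real.pi - θ : ℝ) : ℂ) = 2 * Real.pi * I + -(I * θ) by
      push_cast; ring, exp_add, exp_two_pi_mul_I, one_mul]
  rw [symbolPhase, symbolPhase, hinv, hf]

theorem gfCoeff_neg {f : ℂ → ℂ} (hf : ∀ z, f z⁻¹ = f z) (L : ℕ) (δ : ℤ) :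
    gfCoeff L f (-δ) = gfCoeff L f δ := by
  rw [gfCoeff, gfCoeff, zpow_neg, ← inv_zpow, inv_neg_one, ← Equiv.sum_comp Fin.revPerm]
  congr 1
  refine Finset.sum_congr rfl fun k _ => ?_
  rw [Fin.revPerm_apply, theta_rev, symbolPhase_two_pi_sub hf]
  congr 1
  push_cast
  rw [show I * (2 * Real.pi - theta L k) * -δ =
      I * theta L k * δ + (-δ : ℤ) * (2 * Real.pi * I) by push_cast; ring,
    exp_add, exp_int_mul_two_pi_mul_I, mul_one]

theorem theta_finProdFinEquiv {m M : ℕ} (hm : m ≠ 0) (t : Fin (2 * m)) (j : Fin M) :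
    theta (2 * m * M) (finProdFinEquiv (t, j)) = (theta M j / 2 + t * Real.pi) / m := by
  have hM : (M : ℝ) ≠ 0 := by have := j.pos; positivity
  simp only [theta, finProdFinEquiv_apply_val]
  push_cast
  field_simp
  ring

noncomputable def cosSignSum (M : ℕ) (q : ℂ) : ℂ :=
  ∑ j : Fin M,
    (SignType.sign (Real.cos (theta M j / 2)) : ℂ) * exp (I * (theta M j / 2 : ℝ) * q)

theorem sum_symbolPhase_zpow_add_zpow_neg {m : ℕ} (hm : m ≠ 0) (M : ℕ) (δ : ℤ) :
    ∑ k : Fin (2 * m * M), symbolPhase (fun z => z ^ (m : ℤ) + z ^ (-(m : ℤ))) (theta _ k) *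
        exp (I * theta _ k * δ) =
      (∑ t : Fin (2 * m), (-exp (Real.pi * I * δ / m)) ^ (t : ℕ)) * cosSignSum M (δ / m) := by
  rw [cosSignSum, ← finProdFinEquiv.sum_comp, Fintype.sum_prod_type, sum_mul]
  refine Finset.sum_congr rfl fun t _ => ?_
  rw [mul_sum]
  refine Finset.sum_congr rfl fun j _ => ?_
  have hm' : (m : ℝ) ≠ 0 := Nat.cast_ne_zero.mpr hm
  rw [symbolPhase_zpow_add_zpow_neg, theta_finProdFinEquiv hm, Int.cast_natCast,
    mul_div_cancel₀ _ hm', Real.cos_add_nat_mul_pi, sign_mul, sign_pow, neg_pow, ← exp_nat_mul,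
    show I * (((theta M j / 2 + t * Real.pi) / m : ℝ) : ℂ) * δ =
      I * (theta M j / 2 : ℝ) * (δ / m) + t * (Real.pi * I * δ / m) by push_cast; ring,
    exp_add]
  simp only [Left.sign_neg, sign_one, SignType.coe_mul, SignType.coe_pow, SignType.coe_neg,
    SignType.coe_one]
  ring

theorem sum_pow_eq_ite_of_pow_eq_one {K : Type*} [Field K] [DecidableEq K] {w : K} {n : ℕ}
    (hw : w ^ n = 1) :
    ∑ t : Fin n, w ^ (t : ℕ) = if w = 1 then (n : K) else 0 := by
  rw [Fin.sum_univ_eq_sum_range (w ^ ·)]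
  split_ifs with h
  · simp [h]
  · rw [geom_sum_eq h, hw, sub_self, zero_div]

theorem sum_neg_exp_pow {m : ℕ} (hm : m ≠ 0) (δ : ℤ) :
    ∑ t : Fin (2 * m), (-exp (Real.pi * I * δ / m)) ^ (t : ℕ) =
      if (2 * m : ℤ) ∣ δ + m then (2 * m : ℂ) else 0 := by
  have hζ := isPrimitiveRoot_exp (2 * m) (by omega)
  have hw : -exp (Real.pi * I * δ / m) = exp (2 * Real.pi * I / (2 * m : ℕ)) ^ (δ + m) := by
    rw [neg_eq_neg_one_mul, ← exp_pi_mul_I, ← exp_int_mul, ← exp_add]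
    congr 1
    have : (m : ℂ) ≠ 0 := Nat.cast_ne_zero.mpr hm
    push_cast
    field_simp
    ring
  have hpow : (exp (2 * Real.pi * I / (2 * m : ℕ)) ^ (δ + m)) ^ (2 * m) = 1 := by
    rw [← zpow_natCast, ← zpow_mul, mul_comm (δ + m), zpow_mul, zpow_natCast, hζ.pow_eq_one,
      one_zpow]
  simp only [hw, sum_pow_eq_ite_of_pow_eq_one hpow, hζ.zpow_eq_one_iff_dvd]
  push_cast
  -- the two sides differ only in the `Decidable` instance of the condition
  rfl

theorem gfCoeff_zpow_add_zpow_neg_eq_zero {m : ℕ} (hm : m ≠ 0) (M : ℕ) {δ : ℤ}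
    (hδ : ¬ (2 * m : ℤ) ∣ δ + m) :
    gfCoeff (2 * m * M) (fun z => z ^ (m : ℤ) + z ^ (-(m : ℤ))) δ = 0 := by
  rw [gfCoeff, sum_symbolPhase_zpow_add_zpow_neg hm, sum_neg_exp_pow hm, if_neg hδ, zero_mul,
    mul_zero]

theorem gfCoeff_zpow_add_zpow_neg_of_not_dvd {m : ℕ} (hm : m ≠ 0) (M : ℕ) {δ : ℤ}
    (hδ : ¬ (m : ℤ) ∣ δ) :
    gfCoeff (2 * m * M) (fun z => z ^ (m : ℤ) + z ^ (-(m : ℤ))) δ = 0 :=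
  gfCoeff_zpow_add_zpow_neg_eq_zero hm M fun h =>
    hδ ((Int.dvd_add_left dvd_rfl).mp (dvd_trans ⟨2, by ring⟩ h))

theorem gfCoeff_zpow_add_zpow_neg_two_mul {m : ℕ} (hm : m ≠ 0) (M : ℕ) (e : ℤ) :
    gfCoeff (2 * m * M) (fun z => z ^ (m : ℤ) + z ^ (-(m : ℤ))) (2 * m * e) = 0 := by
  refine gfCoeff_zpow_add_zpow_neg_eq_zero hm M fun h => ?_
  have := Int.le_of_dvd (by omega) ((Int.dvd_add_right (dvd_mul_right _ _)).mp h)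
  omega

theorem gfCoeff_zpow_add_zpow_neg_neg (m : ℤ) (L : ℕ) (δ : ℤ) :
    gfCoeff L (fun z => z ^ m + z ^ (-m)) (-δ) = gfCoeff L (fun z => z ^ m + z ^ (-m)) δ :=
  gfCoeff_neg (fun z => by rw [inv_zpow', inv_zpow', neg_neg, add_comm]) L δ

theorem gfCoeff_add_one (M : ℕ) (e : ℤ) :
    gfCoeff M (fun z => z + 1) e = (-1) ^ e / M * cosSignSum M (2 * e + 1) := by
  rw [gfCoeff, cosSignSum]
  congr 1
  refine Finset.sum_congr rfl fun j _ => ?_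
  rw [symbolPhase_add_one, mul_comm (exp _), mul_assoc, ← exp_add]
  push_cast
  ring_nf

theorem gfCoeff_zpow_add_zpow_neg_odd {m : ℕ} (hm : m ≠ 0) (M : ℕ) (e : ℤ) :
    gfCoeff (2 * m * M) (fun z => z ^ (m : ℤ) + z ^ (-(m : ℤ))) (m * (2 * e + 1)) =
      (-1) ^ m * (-1) ^ e * gfCoeff M (fun z => z + 1) e := by
  have hm' : (m : ℂ) ≠ 0 := Nat.cast_ne_zero.mpr hm
  have hsign : (-1 : ℂ) ^ ((m : ℤ) * (2 * e + 1)) = (-1) ^ m := by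
    rw [show (m : ℤ) * (2 * e + 1) = 2 * (m * e) + m by ring, zpow_add₀ (by norm_num),
      (even_two_mul _).neg_one_zpow, one_mul, zpow_natCast]
  rw [gfCoeff, sum_symbolPhase_zpow_add_zpow_neg hm, sum_neg_exp_pow hm, if_pos ⟨e + 1, by ring⟩,
    gfCoeff_add_one, hsign, Int.cast_mul, Int.cast_natCast, mul_div_cancel_left₀ _ hm']
  have hee : (-1 : ℂ) ^ e * (-1) ^ e = 1 := by rw [← mul_zpow]; norm_num
  rw [mul_assoc ((-1) ^ m), ← mul_assoc ((-1) ^ e), mul_div_assoc', hee]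
  push_cast
  field_simp

theorem diagonal_mul_permMat_conj_apply {M : ℕ} (u v : Fin M → ℂ) (σ : Equiv.Perm (Fin M))
    (A : Matrix (Fin M) (Fin M) ℂ) (a b : Fin M) :
    (Matrix.diagonal u * (permMat σ)ᵀ * A * permMat σ * Matrix.diagonal v) a b =
      u a * A (σ a) (σ b) * v b := by
  simp [Matrix.mul_assoc, Matrix.mul_apply, permMat, Matrix.diagonal_apply]

section Sites

variable {m M L : ℕ} (h : 2 * m * M = L) (r : Fin m) (a b : Fin M)

theorem siteA_sub_siteA :
    (siteA m M L h r a : ℤ) - siteA m M L h r b = 2 * m * (a - b : ℤ) := by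
  simp only [siteA]; push_cast; ring

theorem siteB_sub_siteB :
    (siteB m M L h r a : ℤ) - siteB m M L h r b = 2 * m * (a - b : ℤ) := by
  simp only [siteB]; push_cast; ring

theorem siteB_sub_siteA :
    (siteB m M L h r b : ℤ) - siteA m M L h r a = m * (2 * (b - a : ℤ) + 1) := by
  simp only [siteA, siteB]; push_cast; ring

end Sites

theorem block_reduction_zm_plus_zminv (m L M : ℕ) (hm : 1 ≤ m)
    (hprod : 2 * m * M = L) :
    -- (i) entries between different residues mod m vanish
    (∀ j k : Fin L, ¬ ((j : ℤ) ≡ (k : ℤ) [ZMOD (m : ℤ)]) →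
      Gf L (fun z => z ^ (m : ℤ) + z ^ (-(m : ℤ))) j k = 0) ∧
    -- (ii) the diagonal M×M sub-blocks vanish and the off-diagonal ones are
    -- transposes of each other
    (∀ (r : Fin m) (a b : Fin M),
      Gf L (fun z => z ^ (m : ℤ) + z ^ (-(m : ℤ)))
        (siteA m M L hprod r a) (siteA m M L hprod r b) = 0 ∧
      Gf L (fun z => z ^ (m : ℤ) + z ^ (-(m : ℤ)))
        (siteB m M L hprod r a) (siteB m M L hprod r b) = 0 ∧
      Gf L (fun z => z ^ (m : ℤ) + z ^ (-(m : ℤ)))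
        (siteB m M L hprod r a) (siteA m M L hprod r b) =
      Gf L (fun z => z ^ (m : ℤ) + z ^ (-(m : ℤ)))
        (siteA m M L hprod r b) (siteB m M L hprod r a)) ∧
    -- (iii) the block X is independent of the residue r
    (∀ (r r' : Fin m) (a b : Fin M),
      Gf L (fun z => z ^ (m : ℤ) + z ^ (-(m : ℤ)))
        (siteA m M L hprod r a) (siteB m M L hprod r b) =
      Gf L (fun z => z ^ (m : ℤ) + z ^ (-(m : ℤ)))
        (siteA m M L hprod r' a) (siteB m M L hprod r' b)) ∧
    -- (iv) X is gauge-equivalent to G^{(z+1)}(M)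
    (∀ r : Fin m, ∃ (σ : Equiv.Perm (Fin M)) (u : Fin M → ℂ) (ε : ℂ),
      (∀ i, ‖u i‖ = 1) ∧ (ε = 1 ∨ ε = -1) ∧
      (Matrix.of fun a b : Fin M =>
          Gf L (fun z => z ^ (m : ℤ) + z ^ (-(m : ℤ)))
            (siteA m M L hprod r a) (siteB m M L hprod r b)) =
        ε • (Matrix.diagonal u * (permMat σ)ᵀ * Gf M (fun z => z + 1) * permMat σ *
          Matrix.diagonal fun i => star (u i))) := by
  subst hprod
  have hm0 : m ≠ 0 := by omega
  refine ⟨fun j k hjk => ?_, fun r a b => ⟨?_, ?_, ?_⟩, fun r r' a b => ?_, fun r => ?_⟩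
  · exact gfCoeff_zpow_add_zpow_neg_of_not_dvd hm0 M fun h =>
      hjk (Int.modEq_iff_dvd.mpr (dvd_sub_comm.mp h))
  · rw [Gf_apply, siteA_sub_siteA, gfCoeff_zpow_add_zpow_neg_two_mul hm0]
  · rw [Gf_apply, siteB_sub_siteB, gfCoeff_zpow_add_zpow_neg_two_mul hm0]
  · rw [Gf_apply, Gf_apply, ← neg_sub, gfCoeff_zpow_add_zpow_neg_neg]
  · rw [Gf_apply, Gf_apply, ← neg_sub, ← neg_sub (siteB _ _ _ _ r' b : ℤ), siteB_sub_siteA,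
      siteB_sub_siteA]
  · refine ⟨Fin.revPerm, fun i => (-1) ^ (i : ℕ), (-1) ^ m, fun i => by simp,
      neg_one_pow_eq_or ℂ m, ?_⟩
    ext a b
    rw [Matrix.smul_apply, diagonal_mul_permMat_conj_apply, Matrix.of_apply, Gf_apply, ← neg_sub,
      gfCoeff_zpow_add_zpow_neg_neg, siteB_sub_siteA, gfCoeff_zpow_add_zpow_neg_odd hm0, Gf_apply]
    have hrev : ((Fin.revPerm a : ℕ) : ℤ) - (Fin.revPerm b : ℕ) = b - a := by
      simp only [Fin.revPerm_apply, Fin.val_rev]; omega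
    rw [hrev, smul_eq_mul, star_pow, star_neg, star_one, zpow_sub₀ (by norm_num), zpow_natCast,
      zpow_natCast, div_eq_mul_inv, ← inv_pow, inv_neg_one]
    ring
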